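/- If X is a spiny symmetric set, then its reduction 𝓡X (the quotient of X identifying all fully degenerate simplices in each level) is a spiny symmetric set. -/

import Mathlib

/-- A (skeletal) simplicial set: a contravariant functor on the simplex category,
with `obj n` the set of `n`-simplices and `map α` the action of an
order-preserving map `α : [m] → [n]`. -/
structure SSet' where
  obj : ℕ → Type
  map : ∀ {m n : ℕ}, (Fin (m + 1) →o Fin (n + 1)) → obj n → obj m
  map_id : ∀ (n : ℕ) (x : obj n), map OrderHom.id x = x
  map_comp : ∀ {k m n : ℕ} (α : Fin (k + 1) →o Fin (m + 1)) (β : Fin (m + 1) →o Fin (n + 1))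
      (x : obj n), map (β.comp α) x = map α (map β x)

/-- The order-preserving map `ρ_{ij} : [1] → [n]`, `0 ↦ i`, `1 ↦ j` (for `i ≤ j`). -/
def rho {n : ℕ} (i j : Fin (n + 1)) (h : i ≤ j) : Fin 2 →o Fin (n + 1) where
  toFun := ![i, j]
  monotone' := by
    intro a b hab
    fin_cases a <;> fin_cases b <;> simp_all

/-- The `k`-th edge `ρ_{k,k+1}^*(x)` of an `n`-simplex. -/
def SSet'.edge (X : SSet') {n : ℕ} (x : X.obj n) (k : Fin n) : X.obj 1 :=
  X.map (rho k.castSucc k.succ (Fin.castSucc_lt_succ (i := k)).le) x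

/-- A simplicial set is edgy if each simplex is determined by its string of edges. -/
def SSet'.IsEdgy (X : SSet') : Prop :=
  ∀ n : ℕ, 1 ≤ n → Function.Injective fun (x : X.obj n) (k : Fin n) => X.edge x k

/-- Conjugation of an order-preserving map by the flips `τ`. -/
def conj {m n : ℕ} (α : Fin (m + 1) →o Fin (n + 1)) : Fin (m + 1) →o Fin (n + 1) where
  toFun k := (α k.rev).rev
  monotone' := by
    intro a b hab
    exact Fin.rev_le_rev.mpr (α.monotone (Fin.rev_le_rev.mpr hab))

/-- An anti-involution on a simplicial set `X`, i.e. a simplicial map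
`ν : X^op → X` with `ν^op ∘ ν = id`, described levelwise.  Naturality of
`ν : X^op → X` amounts to `ν (X(τ∘α∘τ) x) = X(α) (ν x)`. -/
structure AntiInvolution (X : SSet') where
  app : ∀ n : ℕ, X.obj n → X.obj n
  naturality : ∀ {m n : ℕ} (α : Fin (m + 1) →o Fin (n + 1)) (x : X.obj n),
    app m (X.map (conj α) x) = X.map α (app n x)
  involutive : ∀ (n : ℕ) (x : X.obj n), app n (app n x) = x

/-- The constant map `[1] → [n]` at the last vertex, i.e. `s_0 ∘ (d_0)^n`. -/
def lastConst (n : ℕ) : Fin 2 →o Fin (n + 1) := ⟨fun _ => Fin.last n, monotone_const⟩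

/-- `LSpec X ν x y` says that `y ∈ X_{2n}` has the edge string
`[f_n† | ⋯ | f_1† | f_1 | ⋯ | f_n]`, where `[f_1 | ⋯ | f_n]` is the edge string of
`x ∈ X_n`, and that the total composite `ρ_{0,2n}^*(y)` is the identity
`s_0(d_0^n x)` on the last vertex of `x`. -/
def LSpec (X : SSet') (ν : AntiInvolution X) {n : ℕ} (x : X.obj n) (y : X.obj (n + n)) : Prop :=
  (∀ k : Fin (n + n), X.edge y k =
      if h : (k : ℕ) < n then ν.app 1 (X.edge x ⟨n - 1 - (k : ℕ), by omega⟩)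
      else X.edge x ⟨(k : ℕ) - n, by have := k.isLt; omega⟩) ∧
  X.map (rho 0 (Fin.last (n + n)) (Fin.zero_le _)) y = X.map (lastConst n) x

/-- A partial groupoid structure on a simplicial set: it is edgy, has an
anti-involution which is the identity on vertices, and has operators
`L : X_n → X_{2n}` with `L[f_1|⋯|f_n] = [f_n†|⋯|f_1†|f_1|⋯|f_n]` whose total
composite is an identity. -/
structure PartialGroupoidStruct (X : SSet') where
  edgy : X.IsEdgy
  inv : AntiInvolution X
  inv_zero : ∀ x : X.obj 0, inv.app 0 x = x
  L : ∀ {n : ℕ}, X.obj n → X.obj (n + n)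
  L_spec : ∀ {n : ℕ}, 1 ≤ n → ∀ x : X.obj n, LSpec X inv x (L x)

/-- The Prop-valued version: `X` together with the anti-involution `ν` is a
partial groupoid. -/
def IsPartialGroupoid (X : SSet') (ν : AntiInvolution X) : Prop :=
  X.IsEdgy ∧ (∀ v : X.obj 0, ν.app 0 v = v) ∧
    ∀ n : ℕ, 1 ≤ n → ∀ x : X.obj n, ∃ y : X.obj (n + n), LSpec X ν x y

/-- The matrix form of an `n`-simplex: `x_{ij} = ρ_{ij}^*(x)` for `i ≤ j`, and
`x_{ji} = (x_{ij})†`. -/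
def matrixForm (X : SSet') (ν : AntiInvolution X) {n : ℕ} (x : X.obj n) (i j : Fin (n + 1)) :
    X.obj 1 :=
  if h : i ≤ j then X.map (rho i j h) x
  else ν.app 1 (X.map (rho j i (le_of_not_ge h)) x)

/-- The fold map `χ_n : [2n] → [n]`, `i ↦ |n - i|`. -/
def chi (n : ℕ) (i : Fin (n + n + 1)) : Fin (n + 1) :=
  ⟨max n (i : ℕ) - min n (i : ℕ), by have := i.isLt; omega⟩

/-- A map of simplicial sets. -/
structure SSetHom (X Y : SSet') where
  app : ∀ n : ℕ, X.obj n → Y.obj n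
  naturality : ∀ {m n : ℕ} (α : Fin (m + 1) →o Fin (n + 1)) (x : X.obj n),
    app m (X.map α x) = Y.map α (app n x)
/-- A symmetric (simplicial) set: a contravariant functor on the category `Υ`
of the sets `[n]` and arbitrary functions. -/
structure SymSet where
  obj : ℕ → Type
  map : ∀ {m n : ℕ}, (Fin (m + 1) → Fin (n + 1)) → obj n → obj m
  map_id : ∀ (n : ℕ) (x : obj n), map id x = x
  map_comp : ∀ {k m n : ℕ} (φ : Fin (k + 1) → Fin (m + 1)) (ψ : Fin (m + 1) → Fin (n + 1))
      (x : obj n), map (ψ ∘ φ) x = map φ (map ψ x)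

/-- Restriction `J^*` of a symmetric set along the inclusion `J : Δ → Υ`. -/
def SymSet.restrict (Z : SymSet) : SSet' where
  obj := Z.obj
  map α x := Z.map (⇑α) x
  map_id n x := Z.map_id n x
  map_comp α β x := Z.map_comp (⇑α) (⇑β) x

/-- A map of symmetric sets. -/
structure SymSetHom (Y Z : SymSet) where
  app : ∀ n : ℕ, Y.obj n → Z.obj n
  naturality : ∀ {m n : ℕ} (φ : Fin (m + 1) → Fin (n + 1)) (x : Y.obj n),
    app m (Y.map φ x) = Z.map φ (app n x)

/-- The identity map of symmetric sets. -/
def SymSetHom.id (X : SymSet) : SymSetHom X X where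
  app _ x := x
  naturality _ _ := rfl

/-- Composition of maps of symmetric sets. -/
def SymSetHom.comp {X Y Z : SymSet} (G : SymSetHom Y Z) (F : SymSetHom X Y) : SymSetHom X Z where
  app n x := G.app n (F.app n x)
  naturality φ x := by rw [F.naturality, G.naturality]

/-- Restriction `J^*` of a map of symmetric sets. -/
def SymSetHom.restrict {Y Z : SymSet} (G : SymSetHom Y Z) : SSetHom Y.restrict Z.restrict where
  app := G.app
  naturality α x := G.naturality (⇑α) x

/-- The `k`-th edge `ρ_{k,k+1}^*(x)` of an `n`-simplex of a symmetric set. -/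
def SymSet.edge (X : SymSet) {n : ℕ} (x : X.obj n) (k : Fin n) : X.obj 1 :=
  X.map (fun t : Fin 2 => if t = 0 then k.castSucc else k.succ) x

/-- A symmetric set is spiny if each simplex is determined by its string of
edges, i.e. `ℰ_n : X_n → ∏_{i=1}^n X_1` is injective for `n ≥ 1`. -/
def SymSet.Spiny (X : SymSet) : Prop :=
  ∀ n : ℕ, 1 ≤ n → Function.Injective fun (x : X.obj n) (k : Fin n) => X.edge x k

/-- An `n`-simplex is fully degenerate if it is the image of a vertex under the
unique map `[n] → [0]`. -/
def SymSet.FullyDeg (X : SymSet) {n : ℕ} (x : X.obj n) : Prop :=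
  ∃ v : X.obj 0, x = X.map (fun _ => (0 : Fin 1)) v

theorem SymSet.fullyDeg_map (X : SymSet) {m n : ℕ} (φ : Fin (m + 1) → Fin (n + 1))
    {x : X.obj n} (h : X.FullyDeg x) : X.FullyDeg (X.map φ x) := by
  obtain ⟨v, rfl⟩ := h
  refine ⟨v, ?_⟩
  rw [← X.map_comp]
  congr 1

/-- The setoid identifying all fully degenerate `n`-simplices. -/
def SymSet.redSetoid (X : SymSet) (n : ℕ) : Setoid (X.obj n) where
  r x y := x = y ∨ (X.FullyDeg x ∧ X.FullyDeg y)
  iseqv := by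
    refine ⟨fun _ => Or.inl rfl, ?_, ?_⟩
    · rintro x y (rfl | ⟨h1, h2⟩)
      · exact Or.inl rfl
      · exact Or.inr ⟨h2, h1⟩
    · rintro x y z (rfl | ⟨h1, h2⟩) h
      · exact h
      · rcases h with rfl | ⟨h3, h4⟩
        · exact Or.inr ⟨h1, h2⟩
        · exact Or.inr ⟨h1, h4⟩

/-- The reduction `𝓡X` of a symmetric set: the levelwise quotient identifying
all fully degenerate simplices to a single point. -/
def SymSet.reduction (X : SymSet) : SymSet where
  obj n := Quotient (X.redSetoid n)
  map φ := Quotient.map (X.map φ) (by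
    rintro x y (rfl | ⟨hx, hy⟩)
    · exact Or.inl rfl
    · exact Or.inr ⟨X.fullyDeg_map φ hx, X.fullyDeg_map φ hy⟩)
  map_id n x := by
    induction x using Quotient.ind
    exact congrArg (Quotient.mk _) (X.map_id n _)
  map_comp φ ψ x := by
    induction x using Quotient.ind
    exact congrArg (Quotient.mk _) (X.map_comp φ ψ _)

/-!
Let `x, y ∈ X_n` have the same edges in `𝓡X`: each pair of corresponding edges is either equal or
consists of two fully degenerate edges. A fully degenerate edge has equal endpoints and is
determined by them, so if all edges of `x` are fully degenerate, then all vertices of `x` coincide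
and spininess identifies `x` with a fully degenerate simplex, and likewise `y`. Otherwise some
edge of `x` is not fully degenerate, hence equal to the corresponding edge of `y`; agreement of
vertices then propagates along the spine, so all edges of `x` and `y` agree and `x = y`.
-/

theorem Fin.iff_of_forall_castSucc_iff_succ {n : ℕ} {P : Fin (n + 1) → Prop}
    (h : ∀ k : Fin n, P k.castSucc ↔ P k.succ) (i j : Fin (n + 1)) : P i ↔ P j := by
  have iff_zero : ∀ i, P i ↔ P 0 := fun i => Fin.induction Iff.rfl (fun k ih => (h k).symm.trans ih) i
  exact (iff_zero i).trans (iff_zero j).symm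

namespace SymSet

variable (X : SymSet)

def vertex {n : ℕ} (x : X.obj n) (i : Fin (n + 1)) : X.obj 0 :=
  X.map (fun _ => i) x

theorem vertex_map {m n : ℕ} (φ : Fin (m + 1) → Fin (n + 1)) (x : X.obj n) (i : Fin (m + 1)) :
    X.vertex (X.map φ x) i = X.vertex x (φ i) :=
  (X.map_comp _ φ x).symm

theorem vertex_of_obj_zero (v : X.obj 0) (i : Fin 1) : X.vertex v i = v := by
  rw [vertex, Subsingleton.elim (fun _ : Fin 1 => i) id, X.map_id]

theorem vertex_edge_zero {n : ℕ} (x : X.obj n) (k : Fin n) :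
    X.vertex (X.edge x k) 0 = X.vertex x k.castSucc :=
  X.vertex_map _ x 0

theorem vertex_edge_one {n : ℕ} (x : X.obj n) (k : Fin n) :
    X.vertex (X.edge x k) 1 = X.vertex x k.succ :=
  X.vertex_map _ x 1

variable {X}

theorem FullyDeg.eq_map_vertex {n : ℕ} {x : X.obj n} (hx : X.FullyDeg x) (i : Fin (n + 1)) :
    x = X.map (fun _ => 0) (X.vertex x i) := by
  obtain ⟨v, rfl⟩ := hx
  rw [X.vertex_map, X.vertex_of_obj_zero]

theorem FullyDeg.vertex_eq {n : ℕ} {x : X.obj n} (hx : X.FullyDeg x) (i j : Fin (n + 1)) :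
    X.vertex x i = X.vertex x j := by
  obtain ⟨v, rfl⟩ := hx
  rw [X.vertex_map, X.vertex_map]

theorem vertex_castSucc_eq_succ_of_fullyDeg_edge {n : ℕ} {x : X.obj n} {k : Fin n}
    (hk : X.FullyDeg (X.edge x k)) : X.vertex x k.castSucc = X.vertex x k.succ := by
  rw [← X.vertex_edge_zero, ← X.vertex_edge_one, hk.vertex_eq]

def EdgeRel {n : ℕ} (x y : X.obj n) (k : Fin n) : Prop :=
  X.redSetoid 1 (X.edge x k) (X.edge y k)

theorem EdgeRel.vertex_castSucc_iff_succ {n : ℕ} {x y : X.obj n} {k : Fin n}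
    (hk : EdgeRel x y k) :
    X.vertex x k.castSucc = X.vertex y k.castSucc ↔ X.vertex x k.succ = X.vertex y k.succ := by
  rcases hk with he | ⟨hx, hy⟩
  · rw [← X.vertex_edge_zero, ← X.vertex_edge_one, he, X.vertex_edge_zero, X.vertex_edge_one]
    exact ⟨fun _ => rfl, fun _ => rfl⟩
  · rw [vertex_castSucc_eq_succ_of_fullyDeg_edge hx, vertex_castSucc_eq_succ_of_fullyDeg_edge hy]

theorem Spiny.eq_of_vertex_eq (h : X.Spiny) {n : ℕ} (hn : 1 ≤ n) {x y : X.obj n}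
    (hv : ∀ i, X.vertex x i = X.vertex y i) (he : ∀ k, EdgeRel x y k) : x = y := by
  refine h n hn (funext fun k => show X.edge x k = X.edge y k from ?_)
  rcases he k with he | ⟨hx, hy⟩
  · exact he
  · rw [hx.eq_map_vertex 0, hy.eq_map_vertex 0, X.vertex_edge_zero, X.vertex_edge_zero, hv]

theorem Spiny.fullyDeg_of_forall_fullyDeg_edge (h : X.Spiny) {n : ℕ} (hn : 1 ≤ n) {x : X.obj n}
    (hx : ∀ k, X.FullyDeg (X.edge x k)) : X.FullyDeg x := by
  set v := X.vertex x 0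
  have hc : X.FullyDeg (X.map (fun _ : Fin (n + 1) => (0 : Fin 1)) v) := ⟨v, rfl⟩
  refine ⟨v, h.eq_of_vertex_eq hn (fun i => ?_) fun k => Or.inr ⟨hx k, X.fullyDeg_map _ hc⟩⟩
  rw [X.vertex_map, X.vertex_of_obj_zero]
  exact (Fin.iff_of_forall_castSucc_iff_succ (P := fun i => X.vertex x i = v)
    (fun k => by rw [vertex_castSucc_eq_succ_of_fullyDeg_edge (hx k)]) i 0).mpr rfl

theorem Spiny.eq_of_edgeRel (h : X.Spiny) {n : ℕ} (hn : 1 ≤ n) {x y : X.obj n}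
    (he : ∀ k, EdgeRel x y k) {k₀ : Fin n} (hk₀ : ¬ X.FullyDeg (X.edge x k₀)) : x = y := by
  have hk₀ : X.edge x k₀ = X.edge y k₀ := (he k₀).resolve_right fun h => hk₀ h.1
  have hv₀ : X.vertex x k₀.castSucc = X.vertex y k₀.castSucc := by
    rw [← X.vertex_edge_zero, hk₀, X.vertex_edge_zero]
  have hv : ∀ i, X.vertex x i = X.vertex y i := fun i =>
    (Fin.iff_of_forall_castSucc_iff_succ (P := fun i => X.vertex x i = X.vertex y i)
      (fun k => (he k).vertex_castSucc_iff_succ) k₀.castSucc i).mp hv₀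
  exact h.eq_of_vertex_eq hn hv he

end SymSet

/-- If `X` is a spiny symmetric set, then so is its reduction
`𝓡X`. -/
theorem reduction_spiny (X : SymSet) (h : X.Spiny) : X.reduction.Spiny := by
  intro n hn a b hab
  induction a using Quotient.ind with | _ x => ?_
  induction b using Quotient.ind with | _ y => ?_
  have he : ∀ k, SymSet.EdgeRel x y k := fun k => Quotient.exact (congrFun hab k)
  by_cases hx : ∀ k, X.FullyDeg (X.edge x k)
  · have hy : ∀ k, X.FullyDeg (X.edge y k) := fun k => (he k).elim (· ▸ hx k) And.right
    exact Quotient.sound <| Or.inr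
      ⟨h.fullyDeg_of_forall_fullyDeg_edge hn hx, h.fullyDeg_of_forall_fullyDeg_edge hn hy⟩
  · obtain ⟨k₀, hk₀⟩ := not_forall.mp hx
    exact congrArg _ (h.eq_of_edgeRel hn he hk₀)
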